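/- Let G=(V,w,m) be a finite weighted graph satisfying the curvature dimension condition CD(K,n) for some K>0 and n<∞, with deg(x) > 0 for all x, and let P_t := exp(tΔ). Then for every f : V → ℝ with Γf ≤ 1 pointwise, every t ≥ 0, and every x ∈ V, |Δ P_t f(x)| ≤ √(Kn) · e^{−Kt} / √( (Kn/(2·Deg(x)) + 1) − e^{−2Kt} ). -/

import Mathlib

open Filter

set_option linter.unusedSectionVars false
set_option maxHeartbeats 1000000

variable {V : Type*}

/-- The degree of a vertex in a finite weighted graph. -/
noncomputable def vertexDeg [Fintype V] (w : V → V → ℝ) (x : V) : ℝ := ∑ y, w x y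

/-- The normalized degree `Deg(x) = deg(x)/m(x)`. -/
noncomputable def nDeg [Fintype V] (w : V → V → ℝ) (m : V → ℝ) (x : V) : ℝ :=
  vertexDeg w x / m x

/-- The graph Laplacian `Δf(x) = (1/m(x)) ∑_y w(x,y)(f(y) - f(x))` on a finite weighted graph. -/
noncomputable def graphLap [Fintype V] (w : V → V → ℝ) (m : V → ℝ) (f : V → ℝ) (x : V) : ℝ :=
  (1 / m x) * ∑ y, w x y * (f y - f x)

/-- The Bakry–Émery operator `Γ`, defined by `2Γ(f,g) = Δ(fg) - fΔg - gΔf`. -/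
noncomputable def bakryGamma [Fintype V] (w : V → V → ℝ) (m : V → ℝ) (f g : V → ℝ) (x : V) : ℝ :=
  (graphLap w m (fun z => f z * g z) x - f x * graphLap w m g x - g x * graphLap w m f x) / 2

/-- The iterated Bakry–Émery operator `Γ₂`, defined by
`2Γ₂(f,g) = ΔΓ(f,g) - Γ(f,Δg) - Γ(g,Δf)`. -/
noncomputable def bakryGamma2 [Fintype V] (w : V → V → ℝ) (m : V → ℝ) (f g : V → ℝ) (x : V) : ℝ :=
  (graphLap w m (bakryGamma w m f g) x - bakryGamma w m f (graphLap w m g) x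
    - bakryGamma w m g (graphLap w m f) x) / 2

/-- The curvature dimension condition `CD(K,n)`: `Γ₂(f) ≥ (1/n)(Δf)² + KΓf` pointwise. -/
def CDCond [Fintype V] (w : V → V → ℝ) (m : V → ℝ) (K n : ℝ) : Prop :=
  ∀ f : V → ℝ, ∀ x : V,
    (1 / n) * (graphLap w m f x) ^ 2 + K * bakryGamma w m f f x ≤ bakryGamma2 w m f f x

/-- The matrix of the graph Laplacian: `(lapMatrix w m).mulVec f = graphLap w m f`. -/
noncomputable def lapMatrix [Fintype V] [DecidableEq V] (w : V → V → ℝ) (m : V → ℝ) :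
    Matrix V V ℝ :=
  fun x y => w x y / m x - if x = y then vertexDeg w x / m x else 0

/-- The heat semigroup `P_t = exp (tΔ)`, as the matrix exponential of `t • Δ`. -/
noncomputable def heatSemigroup [Fintype V] [DecidableEq V] (w : V → V → ℝ) (m : V → ℝ)
    (t : ℝ) (f : V → ℝ) : V → ℝ :=
  (NormedSpace.exp (t • lapMatrix w m)).mulVec f

open NormedSpace in
lemma entry_hasSum [Fintype V] [DecidableEq V] (M : Matrix V V ℝ) (a b : V) :
    HasSum (fun k : ℕ => (((Nat.factorial k : ℝ)⁻¹) • M ^ k) a b) (exp M a b) := by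
  letI : SeminormedRing (Matrix V V ℝ) := Matrix.linftyOpSemiNormedRing
  letI : NormedRing (Matrix V V ℝ) := Matrix.linftyOpNormedRing
  letI : NormedAlgebra ℝ (Matrix V V ℝ) := Matrix.linftyOpNormedAlgebra
  have h := NormedSpace.exp_series_hasSum_exp' (𝕂 := ℝ) M
  exact (Pi.hasSum.mp ((Pi.hasSum.mp h) a)) b

open NormedSpace in
lemma mulVec_hasSum [Fintype V] [DecidableEq V] (M : Matrix V V ℝ) (v : V → ℝ) (a : V) :
    HasSum (fun k : ℕ => ((((Nat.factorial k : ℝ)⁻¹) • M ^ k).mulVec v) a)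
      ((exp M).mulVec v a) := by
  have : HasSum (fun k : ℕ => ∑ b, (((Nat.factorial k : ℝ)⁻¹) • M ^ k) a b * v b)
      (∑ b, exp M a b * v b) := hasSum_sum fun b _ => (entry_hasSum M a b).mul_right (v b)
  simpa [Matrix.mulVec, dotProduct] using this

open NormedSpace in
lemma exp_mulVec_one [Fintype V] [DecidableEq V] {M : Matrix V V ℝ}
    (hM : M.mulVec (fun _ => 1) = 0) (a : V) :
    (exp M).mulVec (fun _ => 1) a = 1 := by
  have h := mulVec_hasSum M (fun _ => 1) a
  have hterm : ∀ k : ℕ, ((((Nat.factorial k : ℝ)⁻¹) • M ^ k).mulVec (fun _ => 1)) a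
      = if k = 0 then 1 else 0 := by
    intro k
    cases k with
    | zero => simp [Matrix.smul_mulVec]
    | succ k =>
      rw [pow_succ, Matrix.smul_mulVec, ← Matrix.mulVec_mulVec, hM]
      simp
  simp_rw [hterm] at h
  exact h.unique (hasSum_ite_eq 0 1)

open NormedSpace in
lemma exp_comm_lap [Fintype V] [DecidableEq V] (L : Matrix V V ℝ) (s : ℝ) :
    L * exp (s • L) = exp (s • L) * L := by
  letI : SeminormedRing (Matrix V V ℝ) := Matrix.linftyOpSemiNormedRing
  letI : NormedRing (Matrix V V ℝ) := Matrix.linftyOpNormedRing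
  letI : NormedAlgebra ℝ (Matrix V V ℝ) := Matrix.linftyOpNormedAlgebra
  exact ((Commute.refl L).smul_right s).exp_right

open NormedSpace in
lemma exp_semigroup [Fintype V] [DecidableEq V] (L : Matrix V V ℝ) (a b : ℝ) :
    exp (a • L) * exp (b • L) = exp ((a + b) • L) := by
  rw [← Matrix.exp_add_of_commute _ _ (((Commute.refl L).smul_left a).smul_right b),
    ← add_smul]

open NormedSpace in
lemma pow_entry_nonneg [Fintype V] [DecidableEq V] {M : Matrix V V ℝ}
    (hM : ∀ a b, 0 ≤ M a b) (k : ℕ) : ∀ a b, 0 ≤ (M ^ k) a b := by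
  induction k with
  | zero => intro a b; simp [Matrix.one_apply]; positivity
  | succ k ih =>
    intro a b
    rw [pow_succ, Matrix.mul_apply]
    exact Finset.sum_nonneg fun c _ => mul_nonneg (ih a c) (hM c b)

open NormedSpace in
lemma exp_entry_nonneg_of_nonneg [Fintype V] [DecidableEq V] {M : Matrix V V ℝ}
    (hM : ∀ a b, 0 ≤ M a b) (a b : V) : 0 ≤ exp M a b := by
  refine hasSum_le (fun k => ?_) hasSum_zero (entry_hasSum M a b)
  have : (((Nat.factorial k : ℝ)⁻¹) • M ^ k) a b
      = ((Nat.factorial k : ℝ)⁻¹) * (M ^ k) a b := rfl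
  rw [this]
  exact mul_nonneg (by positivity) (pow_entry_nonneg hM k a b)

open NormedSpace in
lemma exp_smul_one_eq [Fintype V] [DecidableEq V] (r : ℝ) :
    exp (r • (1 : Matrix V V ℝ)) = Real.exp r • (1 : Matrix V V ℝ) := by
  letI : SeminormedRing (Matrix V V ℝ) := Matrix.linftyOpSemiNormedRing
  letI : NormedRing (Matrix V V ℝ) := Matrix.linftyOpNormedRing
  letI : NormedAlgebra ℝ (Matrix V V ℝ) := Matrix.linftyOpNormedAlgebra
  have h1 : r • (1 : Matrix V V ℝ) = Matrix.diagonal (fun _ => r) := by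
    ext i j; simp [Matrix.one_apply, Matrix.diagonal_apply]
  rw [h1, Matrix.exp_diagonal]
  ext i j
  simp [Matrix.diagonal_apply, Matrix.one_apply, Real.exp_eq_exp_ℝ]

open NormedSpace in
lemma exp_entry_nonneg_of_shift [Fintype V] [DecidableEq V] {M : Matrix V V ℝ} (c : ℝ)
    (hM : ∀ a b, 0 ≤ M a b + (if a = b then c else 0)) (a b : V) :
    0 ≤ exp M a b := by
  letI : SeminormedRing (Matrix V V ℝ) := Matrix.linftyOpSemiNormedRing
  letI : NormedRing (Matrix V V ℝ) := Matrix.linftyOpNormedRing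
  letI : NormedAlgebra ℝ (Matrix V V ℝ) := Matrix.linftyOpNormedAlgebra
  have hsplit : M = (M + c • (1 : Matrix V V ℝ)) + (-c) • (1 : Matrix V V ℝ) := by
    simp [add_smul, neg_smul]
  have hcomm : Commute (M + c • (1 : Matrix V V ℝ)) ((-c) • (1 : Matrix V V ℝ)) :=
    ((Commute.one_right _).smul_right (-c))
  have hadd := Matrix.exp_add_of_commute (M + c • (1 : Matrix V V ℝ))
    ((-c) • (1 : Matrix V V ℝ)) hcomm
  rw [hsplit, hadd, exp_smul_one_eq]
  have hN : ∀ a b, 0 ≤ (M + c • (1 : Matrix V V ℝ)) a b := by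
    intro a b
    have := hM a b
    simp only [Matrix.add_apply, Matrix.smul_apply, Matrix.one_apply, smul_eq_mul]
    by_cases h : a = b <;> simp [h] at this ⊢ <;> linarith
  have h1 : (exp (M + c • (1 : Matrix V V ℝ)) * (Real.exp (-c) • (1 : Matrix V V ℝ))) a b
      = exp (M + c • (1 : Matrix V V ℝ)) a b * Real.exp (-c) := by
    rw [Matrix.mul_smul, Matrix.mul_one, Matrix.smul_apply, smul_eq_mul]; ring
  rw [h1]
  exact mul_nonneg (exp_entry_nonneg_of_nonneg hN a b) (Real.exp_nonneg _)

open NormedSpace in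
lemma exp_entry_deriv [Fintype V] [DecidableEq V] (L : Matrix V V ℝ) (a b : V) (s : ℝ) :
    HasDerivAt (fun u : ℝ => exp (u • L) a b) ((L * exp (s • L)) a b) s := by
  letI : SeminormedRing (Matrix V V ℝ) := Matrix.linftyOpSemiNormedRing
  letI : NormedRing (Matrix V V ℝ) := Matrix.linftyOpNormedRing
  letI : NormedAlgebra ℝ (Matrix V V ℝ) := Matrix.linftyOpNormedAlgebra
  have h := hasDerivAt_exp_smul_const' (𝕂 := ℝ) L s
  let e : Matrix V V ℝ →L[ℝ] ℝ :=
    LinearMap.toContinuousLinearMap ((LinearMap.proj b).comp (LinearMap.proj (R := ℝ)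
      (φ := fun _ : V => V → ℝ) a))
  exact e.hasFDerivAt.comp_hasDerivAt s h

section Basic
variable [Fintype V] [DecidableEq V] (w : V → V → ℝ) (m : V → ℝ)

lemma lapMatrix_mulVec (f : V → ℝ) : (lapMatrix w m).mulVec f = graphLap w m f := by
  funext x
  simp only [lapMatrix, Matrix.mulVec, dotProduct, graphLap, vertexDeg, Finset.mul_sum,
    sub_mul, ite_mul, zero_mul, Finset.sum_sub_distrib, Finset.sum_ite_eq,
    Finset.mem_univ, if_true]
  rw [Finset.sum_div, Finset.sum_mul, ← Finset.sum_sub_distrib]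
  exact Finset.sum_congr rfl fun y _ => by ring

lemma gamma_eq (f g : V → ℝ) (x : V) :
    bakryGamma w m f g x = (1 / (2 * m x)) * ∑ y, w x y * ((f y - f x) * (g y - g x)) := by
  simp only [bakryGamma, graphLap, Finset.mul_sum, ← Finset.sum_sub_distrib]
  rw [Finset.sum_div]
  exact Finset.sum_congr rfl fun y _ => by ring

lemma jensen_sq (p g : V → ℝ) (hp : ∀ y, 0 ≤ p y) (h1 : ∑ y, p y = 1) :
    (∑ y, p y * g y) ^ 2 ≤ ∑ y, p y * g y ^ 2 := by
  have h := Finset.sum_mul_sq_le_sq_mul_sq Finset.univ (fun y => Real.sqrt (p y))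
    (fun y => Real.sqrt (p y) * g y)
  have e1 : ∀ y : V, Real.sqrt (p y) * (Real.sqrt (p y) * g y) = p y * g y := fun y => by
    rw [← mul_assoc, Real.mul_self_sqrt (hp y)]
  have e2 : ∀ y : V, Real.sqrt (p y) ^ 2 = p y := fun y => Real.sq_sqrt (hp y)
  have e3 : ∀ y : V, (Real.sqrt (p y) * g y) ^ 2 = p y * g y ^ 2 := fun y => by
    rw [mul_pow, e2 y]
  simp_rw [e1, e2, e3, h1, one_mul] at h
  exact h

lemma sq_lap_le (hnonneg : ∀ x y, 0 ≤ w x y) (f : V → ℝ) (x : V) :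
    (graphLap w m f x) ^ 2 ≤ 2 * nDeg w m x * bakryGamma w m f f x := by
  have key : (∑ y, w x y * (f y - f x)) ^ 2
      ≤ vertexDeg w x * ∑ y, w x y * ((f y - f x) * (f y - f x)) := by
    have h := Finset.sum_mul_sq_le_sq_mul_sq Finset.univ (fun y => Real.sqrt (w x y))
      (fun y => Real.sqrt (w x y) * (f y - f x))
    have e1 : ∀ y : V, Real.sqrt (w x y) * (Real.sqrt (w x y) * (f y - f x))
        = w x y * (f y - f x) := fun y => by
      rw [← mul_assoc, Real.mul_self_sqrt (hnonneg x y)]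
    have e2 : ∀ y : V, Real.sqrt (w x y) ^ 2 = w x y := fun y => Real.sq_sqrt (hnonneg x y)
    have e3 : ∀ y : V, (Real.sqrt (w x y) * (f y - f x)) ^ 2
        = w x y * ((f y - f x) * (f y - f x)) := fun y => by
      rw [mul_pow, e2 y]; ring
    simp_rw [e1, e2, e3] at h
    exact h.trans_eq (by rw [vertexDeg])
  rw [graphLap, gamma_eq, nDeg, vertexDeg]
  rw [mul_pow]
  calc (1 / m x) ^ 2 * (∑ y, w x y * (f y - f x)) ^ 2
      ≤ (1 / m x) ^ 2 * ((∑ y, w x y) * ∑ y, w x y * ((f y - f x) * (f y - f x))) := by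
        apply mul_le_mul_of_nonneg_left _ (sq_nonneg _)
        exact key.trans_eq (by rw [vertexDeg])
    _ = 2 * ((∑ y, w x y) / m x) * ((1 / (2 * m x)) * ∑ y, w x y * ((f y - f x) * (f y - f x))) := by
        ring
end Basic

theorem abs_lap_heat_le_of_CD [Fintype V] [DecidableEq V]
    (w : V → V → ℝ) (m : V → ℝ)
    (hsymm : ∀ x y, w x y = w y x) (hnonneg : ∀ x y, 0 ≤ w x y)
    (hdiag : ∀ x, w x x = 0) (hm : ∀ x, 0 < m x)
    (hdeg : ∀ x, 0 < vertexDeg w x)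
    (K n : ℝ) (hK : 0 < K) (hn : 0 < n) (hCD : CDCond w m K n)
    (f : V → ℝ) (hf : ∀ z, bakryGamma w m f f z ≤ 1)
    (t : ℝ) (ht : 0 ≤ t) (x : V) :
    |graphLap w m (heatSemigroup w m t f) x| ≤
      Real.sqrt (K * n) * Real.exp (-K * t) /
        Real.sqrt ((K * n / (2 * nDeg w m x) + 1) - Real.exp (-2 * K * t)) := by
  set L : Matrix V V ℝ := lapMatrix w m with hL
  set E : ℝ → Matrix V V ℝ := fun u => NormedSpace.exp (u • L) with hE
  set g : ℝ → V → ℝ := fun u => (E u).mulVec f with hgdef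
  -- nonnegativity of heat kernel entries
  have hentry : ∀ s : ℝ, 0 ≤ s → ∀ a b, 0 ≤ E s a b := by
    intro s hs a b
    rw [hE]
    apply exp_entry_nonneg_of_shift (s * (∑ z, vertexDeg w z / m z))
    intro a b
    have hsum_le : ∀ a : V, vertexDeg w a / m a ≤ ∑ z, vertexDeg w z / m z := by
      intro a
      exact Finset.single_le_sum (fun z _ => div_nonneg (le_of_lt (hdeg z)) (le_of_lt (hm z)))
        (Finset.mem_univ a)
    by_cases h : a = b
    · subst h
      simp only [Matrix.smul_apply, hL, lapMatrix, if_true, smul_eq_mul, if_pos rfl]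
      rw [hdiag a]
      have := hsum_le a
      have h0 : (0:ℝ) / m a = 0 := zero_div _
      rw [h0, zero_sub]
      nlinarith [hsum_le a]
    · simp only [Matrix.smul_apply, hL, lapMatrix, if_neg h, smul_eq_mul]
      have := mul_nonneg hs (div_nonneg (hnonneg a b) (le_of_lt (hm a)))
      linarith
  -- rows sum to one
  have hL1 : L.mulVec (fun _ => 1) = 0 := by
    rw [hL, lapMatrix_mulVec]
    funext z
    simp [graphLap]
  have hsum1 : ∀ (s : ℝ) (a : V), ∑ y, E s a y = 1 := by
    intro s a
    have h0 : (s • L).mulVec (fun _ => 1) = 0 := by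
      rw [Matrix.smul_mulVec, hL1]; simp
    have := exp_mulVec_one h0 a
    rw [hE]
    simpa [Matrix.mulVec, dotProduct] using this
  -- derivative of g
  have hgd : ∀ (z : V) (s : ℝ), HasDerivAt (fun u => g u z) (graphLap w m (g s) z) s := by
    intro z s
    have h1 : HasDerivAt (fun u : ℝ => ∑ b, NormedSpace.exp (u • L) z b * f b)
        (∑ b, (L * NormedSpace.exp (s • L)) z b * f b) s :=
      HasDerivAt.fun_sum (fun b _ => (exp_entry_deriv L z b s).mul_const (f b))
    have e1 : (fun u : ℝ => g u z) = fun u : ℝ => ∑ b, NormedSpace.exp (u • L) z b * f b := by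
      funext u
      simp [hgdef, hE, Matrix.mulVec, dotProduct]
    have e2 : ∑ b, (L * NormedSpace.exp (s • L)) z b * f b = graphLap w m (g s) z := by
      have h3 : ((L * E s).mulVec f) z = (L.mulVec (g s)) z := by
        rw [hgdef]
        rw [← Matrix.mulVec_mulVec]
      calc ∑ b, (L * NormedSpace.exp (s • L)) z b * f b = ((L * E s).mulVec f) z := by
            rw [hE]; simp [Matrix.mulVec, dotProduct]
        _ = (L.mulVec (g s)) z := h3
        _ = graphLap w m (g s) z := by rw [hL, lapMatrix_mulVec]
    rw [e1, ← e2]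
    exact h1
  -- derivative of the Gamma term
  have hGamd : ∀ (y : V) (s : ℝ), HasDerivAt (fun u => bakryGamma w m (g u) (g u) y)
      (2 * bakryGamma w m (g s) (graphLap w m (g s)) y) s := by
    intro y s
    have h1 : ∀ z : V, HasDerivAt (fun u => w y z * ((g u z - g u y) * (g u z - g u y)))
        (w y z * ((graphLap w m (g s) z - graphLap w m (g s) y) * (g s z - g s y)
          + (g s z - g s y) * (graphLap w m (g s) z - graphLap w m (g s) y))) s := fun z =>
      (((hgd z s).sub (hgd y s)).mul ((hgd z s).sub (hgd y s))).const_mul (w y z)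
    have h2 := (HasDerivAt.fun_sum (fun z (_ : z ∈ Finset.univ) => h1 z)).const_mul (1 / (2 * m y))
    have e1 : (fun u => bakryGamma w m (g u) (g u) y)
        = fun u => (1 / (2 * m y)) * ∑ z, w y z * ((g u z - g u y) * (g u z - g u y)) := by
      funext u
      rw [gamma_eq]
    rw [e1]
    refine h2.congr_deriv ?_
    rw [gamma_eq]
    simp only [Finset.mul_sum]
    exact Finset.sum_congr rfl fun z _ => by ring
  -- derivative of the kernel factor
  have hEd : ∀ (a b : V) (s : ℝ), HasDerivAt (fun u : ℝ => E (t - u) a b)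
      (-((L * E (t - s)) a b)) s := by
    intro a b s
    have h1 := exp_entry_deriv L a b (t - s)
    have h2 : HasDerivAt (fun u : ℝ => t - u) (-1) s := (hasDerivAt_id s).const_sub t
    have h3 := HasDerivAt.comp s h1 h2
    rw [hE]
    rw [mul_neg_one] at h3
    exact h3
  set F : ℝ → ℝ := fun s => ∑ y, E (t - s) x y * bakryGamma w m (g s) (g s) y with hF
  set Fd : ℝ → ℝ := fun s => ∑ y, (-((L * E (t - s)) x y) * bakryGamma w m (g s) (g s) y
      + E (t - s) x y * (2 * bakryGamma w m (g s) (graphLap w m (g s)) y)) with hFd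
  have hFderiv : ∀ s, HasDerivAt F (Fd s) s := by
    intro s
    exact HasDerivAt.fun_sum fun y _ => (hEd x y s).mul (hGamd y s)
  -- commuting the Laplacian through the semigroup
  have hswap : ∀ (h : V → ℝ) (s' : ℝ), ∑ y, (L * E s') x y * h y
      = ∑ y, E s' x y * graphLap w m h y := by
    intro h s'
    have h1 : ∑ y, (L * E s') x y * h y = ((L * E s').mulVec h) x := by
      simp [Matrix.mulVec, dotProduct]
    have h2 : L * E s' = E s' * L := by
      rw [hE]; exact exp_comm_lap L s'
    rw [h1, h2, ← Matrix.mulVec_mulVec, hL, lapMatrix_mulVec]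
    simp [Matrix.mulVec, dotProduct]
  have hFd_eq : ∀ s, Fd s = ∑ y, E (t - s) x y * (-2 * bakryGamma2 w m (g s) (g s) y) := by
    intro s
    calc Fd s = -(∑ y, (L * E (t - s)) x y * bakryGamma w m (g s) (g s) y)
          + ∑ y, E (t - s) x y * (2 * bakryGamma w m (g s) (graphLap w m (g s)) y) := by
          simp only [hFd]
          rw [Finset.sum_add_distrib]
          congr 1
          rw [← Finset.sum_neg_distrib]
          exact Finset.sum_congr rfl fun y _ => by ring
      _ = -(∑ y, E (t - s) x y * graphLap w m (bakryGamma w m (g s) (g s)) y)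
          + ∑ y, E (t - s) x y * (2 * bakryGamma w m (g s) (graphLap w m (g s)) y) := by
          rw [hswap]
      _ = ∑ y, E (t - s) x y * (-2 * bakryGamma2 w m (g s) (g s) y) := by
          rw [neg_add_eq_sub, ← Finset.sum_sub_distrib]
          refine Finset.sum_congr rfl fun y _ => ?_
          simp only [bakryGamma2]
          ring
  -- the commuted Laplacian of g t
  have hB : ∀ s : ℝ, ∑ y, E (t - s) x y * graphLap w m (g s) y = graphLap w m (g t) x := by
    intro s
    have h1 : graphLap w m (g s) = (L * E s).mulVec f := by
      rw [hgdef, ← Matrix.mulVec_mulVec, hL, lapMatrix_mulVec]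
    have h2 : E (t - s) * (L * E s) = L * E t := by
      calc E (t - s) * (L * E s) = E (t - s) * (E s * L) := by
            rw [hE]; rw [exp_comm_lap]
        _ = (E (t - s) * E s) * L := by rw [mul_assoc]
        _ = E t * L := by
            rw [hE]
            rw [exp_semigroup]
            norm_num
        _ = L * E t := by rw [hE, exp_comm_lap]
    calc ∑ y, E (t - s) x y * graphLap w m (g s) y
        = ((E (t - s)).mulVec (graphLap w m (g s))) x := by
          simp [Matrix.mulVec, dotProduct]
      _ = ((E (t - s) * (L * E s)).mulVec f) x := by rw [h1, Matrix.mulVec_mulVec]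
      _ = ((L * E t).mulVec f) x := by rw [h2]
      _ = (L.mulVec (g t)) x := by rw [hgdef, ← Matrix.mulVec_mulVec]
      _ = graphLap w m (g t) x := by rw [hL, lapMatrix_mulVec]
  set B : ℝ := graphLap w m (g t) x with hBdef
  set A : ℝ := B ^ 2 with hA
  have hA0 : 0 ≤ A := sq_nonneg B
  have hFd_le : ∀ s, 0 ≤ s → s ≤ t → Fd s ≤ -2 * K * F s - (2 / n) * A := by
    intro s h0 h1
    rw [hFd_eq s]
    have hpt : ∀ y : V, E (t - s) x y * (-2 * bakryGamma2 w m (g s) (g s) y)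
        ≤ E (t - s) x y * (-2 * ((1 / n) * (graphLap w m (g s) y) ^ 2
          + K * bakryGamma w m (g s) (g s) y)) := by
      intro y
      apply mul_le_mul_of_nonneg_left _ (hentry (t - s) (by linarith) x y)
      have := hCD (g s) y
      linarith
    refine le_trans (Finset.sum_le_sum fun y _ => hpt y) ?_
    have expand : ∑ y, E (t - s) x y * (-2 * ((1 / n) * (graphLap w m (g s) y) ^ 2
          + K * bakryGamma w m (g s) (g s) y))
        = -2 * K * F s - (2 / n) * ∑ y, E (t - s) x y * (graphLap w m (g s) y) ^ 2 := by
      rw [hF]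
      simp only
      rw [Finset.mul_sum, Finset.mul_sum, ← Finset.sum_sub_distrib]
      exact Finset.sum_congr rfl fun y _ => by ring
    rw [expand]
    have hjen : A ≤ ∑ y, E (t - s) x y * (graphLap w m (g s) y) ^ 2 := by
      have hp : ∀ y, 0 ≤ E (t - s) x y := hentry (t - s) (by linarith) x
      have h1' : ∑ y, E (t - s) x y = 1 := hsum1 (t - s) x
      have hj := jensen_sq (fun y => E (t - s) x y) (graphLap w m (g s)) hp h1'
      rw [hB s] at hj
      rw [hA, hBdef]
      exact hj
    have h2n : (0:ℝ) ≤ 2 / n := by positivity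
    nlinarith [mul_le_mul_of_nonneg_left hjen h2n]
  set G : ℝ → ℝ := fun s => Real.exp (2 * K * s) * F s
      + (A / (K * n)) * (Real.exp (2 * K * s) - 1) with hG
  have he : ∀ s : ℝ, HasDerivAt (fun u => Real.exp (2 * K * u)) (Real.exp (2 * K * s) * (2 * K)) s := by
    intro s
    have h1 : HasDerivAt (fun u : ℝ => 2 * K * u) (2 * K) s := by
      simpa using (hasDerivAt_id s).const_mul (2 * K)
    exact h1.exp
  have hGd : ∀ s, HasDerivAt G
      (Real.exp (2 * K * s) * (2 * K) * F s + Real.exp (2 * K * s) * Fd s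
        + A / (K * n) * (Real.exp (2 * K * s) * (2 * K))) s := by
    intro s
    exact ((he s).mul (hFderiv s)).add (((he s).sub_const 1).const_mul (A / (K * n)))
  have hGd_le : ∀ s, 0 ≤ s → s ≤ t → deriv G s ≤ 0 := by
    intro s h0 h1
    rw [(hGd s).deriv]
    have h2 := hFd_le s h0 h1
    have h3 : (0:ℝ) ≤ Real.exp (2 * K * s) := le_of_lt (Real.exp_pos _)
    have h4 : A / (K * n) * (Real.exp (2 * K * s) * (2 * K))
        = Real.exp (2 * K * s) * ((2 / n) * A) := by
      field_simp
    rw [h4]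
    nlinarith [mul_le_mul_of_nonneg_left h2 h3]
  have hanti : AntitoneOn G (Set.Icc 0 t) := by
    apply antitoneOn_of_deriv_nonpos (convex_Icc 0 t)
    · exact Continuous.continuousOn (continuous_iff_continuousAt.mpr fun s =>
        (hGd s).differentiableAt.continuousAt)
    · intro s hs
      exact ((hGd s).differentiableAt).differentiableWithinAt
    · intro s hs
      rw [interior_Icc] at hs
      exact hGd_le s hs.1.le hs.2.le
  have hGt : G t ≤ G 0 := hanti (Set.left_mem_Icc.mpr ht) (Set.right_mem_Icc.mpr ht) ht
  -- endpoint values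
  have hE0 : E 0 = 1 := by
    rw [hE]
    simp only [zero_smul]
    exact NormedSpace.exp_zero
  have hg0 : g 0 = f := by
    rw [hgdef]
    simp only
    rw [hE0, Matrix.one_mulVec]
  have hFt : F t = bakryGamma w m (g t) (g t) x := by
    rw [hF]
    simp only [sub_self, hE0, Matrix.one_apply]
    simp [Finset.sum_ite_eq, ite_mul]
  have hF0 : F 0 ≤ 1 := by
    rw [hF]
    simp only [sub_zero, hg0]
    calc ∑ y, E t x y * bakryGamma w m f f y ≤ ∑ y, E t x y * 1 :=
          Finset.sum_le_sum fun y _ => mul_le_mul_of_nonneg_left (hf y) (hentry t ht x y)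
      _ = 1 := by
          simp only [mul_one]
          exact hsum1 t x
  have hG0 : G 0 = F 0 := by
    rw [hG]
    simp
  have hchain : Real.exp (2 * K * t) * F t + (A / (K * n)) * (Real.exp (2 * K * t) - 1) ≤ 1 := by
    have h5 : G t = Real.exp (2 * K * t) * F t + (A / (K * n)) * (Real.exp (2 * K * t) - 1) := by
      rw [hG]
    calc Real.exp (2 * K * t) * F t + (A / (K * n)) * (Real.exp (2 * K * t) - 1)
        = G t := h5.symm
      _ ≤ G 0 := hGt
      _ = F 0 := hG0
      _ ≤ 1 := hF0
  -- final algebra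
  set D : ℝ := nDeg w m x with hD
  have hD0 : 0 < D := by
    rw [hD, nDeg]
    exact div_pos (hdeg x) (hm x)
  have h2 : A ≤ 2 * D * F t := by
    rw [hFt, hA, hBdef, hD]
    exact sq_lap_le w m hnonneg (g t) x
  set P : ℝ := Real.exp (2 * K * t) with hP
  have hP0 : 0 < P := Real.exp_pos _
  have hP1 : 1 ≤ P := Real.one_le_exp (by positivity)
  have hPinv : Real.exp (-2 * K * t) = P⁻¹ := by
    rw [hP, ← Real.exp_neg]
    congr 1
    ring
  have hFt_ge : A / (2 * D) ≤ F t := by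
    rw [div_le_iff₀ (by positivity)]
    linarith [h2]
  have h3 : P * (A / (2 * D)) + (A / (K * n)) * (P - 1) ≤ 1 := by
    have := mul_le_mul_of_nonneg_left hFt_ge (le_of_lt hP0)
    linarith [hchain]
  set den : ℝ := K * n / (2 * D) + 1 - Real.exp (-2 * K * t) with hdenDef
  have hden : 0 < den := by
    rw [hdenDef, hPinv]
    have h5 : P⁻¹ ≤ 1 := inv_le_one_of_one_le₀ hP1
    have h6 : 0 < K * n / (2 * D) := by positivity
    linarith
  have key : A * den ≤ K * n * Real.exp (-2 * K * t) := by
    have heq : A * den = (P * (A / (2 * D)) + (A / (K * n)) * (P - 1)) * (K * n * P⁻¹) := by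
      rw [hdenDef, hPinv]
      field_simp
      ring
    rw [heq, hPinv]
    calc (P * (A / (2 * D)) + (A / (K * n)) * (P - 1)) * (K * n * P⁻¹)
        ≤ 1 * (K * n * P⁻¹) := mul_le_mul_of_nonneg_right h3 (by positivity)
      _ = K * n * P⁻¹ := one_mul _
  have hAle : A ≤ K * n * Real.exp (-2 * K * t) / den := (le_div_iff₀ hden).mpr key
  have habs : |graphLap w m (heatSemigroup w m t f) x| = Real.sqrt A := by
    have hBB : graphLap w m (heatSemigroup w m t f) x = B := rfl
    rw [hBB, hA]
    exact (Real.sqrt_sq_eq_abs B).symm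
  rw [habs]
  have hexpsq : Real.exp (-2 * K * t) = (Real.exp (-K * t)) ^ 2 := by
    rw [sq, ← Real.exp_add]
    congr 1
    ring
  have h3sqrt : Real.sqrt (Real.exp (-2 * K * t)) = Real.exp (-K * t) := by
    rw [hexpsq, Real.sqrt_sq (Real.exp_nonneg _)]
  calc Real.sqrt A ≤ Real.sqrt (K * n * Real.exp (-2 * K * t) / den) := Real.sqrt_le_sqrt hAle
    _ = Real.sqrt (K * n * Real.exp (-2 * K * t)) / Real.sqrt den :=
        Real.sqrt_div (mul_nonneg (mul_nonneg hK.le hn.le) (Real.exp_nonneg _)) _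
    _ = Real.sqrt (K * n) * Real.sqrt (Real.exp (-2 * K * t)) / Real.sqrt den := by
        rw [Real.sqrt_mul (mul_nonneg hK.le hn.le)]
    _ = Real.sqrt (K * n) * Real.exp (-K * t) / Real.sqrt den := by rw [h3sqrt]
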